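/- Under the Setup with Hypotheses (H2) and (H3), let y ∈ centre(L), let m_y be a lexicographically least element of { w ∈ adh(L) : y is a prefix of w } and M_y a lexicographically greatest element of that set. Then α_{m_y} = α_y and α_{M_y} = α_y + r_y. -/

import Mathlib

open Filter Topology

/-- The prefix of length `ℓ` of an infinite word `w : ℕ → A`. -/
def prefixOf {A : Type*} (w : ℕ → A) (ℓ : ℕ) : List A := List.ofFn (fun i : Fin ℓ => w i)

/-- The set of prefixes of words of a language `L`. -/
def pref {A : Type*} (L : Set (List A)) : Set (List A) := {u | ∃ v ∈ L, u <+: v}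

/-- The adherence of a language. -/
def adh {A : Type*} (L : Set (List A)) : Set (ℕ → A) :=
  {w | ∀ ℓ : ℕ, prefixOf w ℓ ∈ pref L}

/-- The center of a language: the finite prefixes of elements of the adherence. -/
def centre {A : Type*} (L : Set (List A)) : Set (List A) :=
  {u | ∃ w ∈ adh L, u = prefixOf w u.length}

/-- Transition function of a deterministic automaton extended to words. -/
def deltaStar {Q A : Type*} (δ : Q → A → Q) (q : Q) (w : List A) : Q := w.foldl δ q

/-- `ucomp δ F q n` : number of words of length `n` accepted from state `q`. -/
noncomputable def ucomp {Q A : Type*} (δ : Q → A → Q) (F : Set Q) (q : Q) (n : ℕ) : ℕ :=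
  {z : List A | z.length = n ∧ deltaStar δ q z ∈ F}.ncard

/-- `vcomp δ F q n` : number of words of length at most `n` accepted from state `q`. -/
noncomputable def vcomp {Q A : Type*} (δ : Q → A → Q) (F : Set Q) (q : Q) (n : ℕ) : ℕ :=
  ∑ m ∈ Finset.range (n + 1), ucomp δ F q m

open scoped Classical in
/-- For a word `y`, `alphaFin L r y = s₀ + Σ_{x ∈ centre(L), |x| = |y|, x <_lex y} r x`
where `s₀ = 1 - r ε`.  (Words of length `|y|` are enumerated as `List.ofFn f`
for `f : Fin |y| → A`.) -/
noncomputable def alphaFin {A : Type*} [Fintype A] [LinearOrder A]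
    (L : Set (List A)) (r : List A → ℝ) (y : List A) : ℝ :=
  (1 - r []) +
    ∑ f : Fin y.length → A,
      if List.ofFn f ∈ centre L ∧ List.Lex (· < ·) (List.ofFn f) y then r (List.ofFn f)
      else 0

/-- Lexicographic order on infinite words induced by the order on the alphabet. -/
def infLexLe {A : Type*} [LinearOrder A] (w z : ℕ → A) : Prop :=
  w = z ∨ ∃ k : ℕ, (∀ i < k, w i = z i) ∧ w k < z k

/-!
By (H2) the frequencies `r` inherit two properties of the counting functions: they are
additive, `r u = ∑ a, r (u ++ [a])` (accepted words are counted by their first letter), and they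
vanish off `centre L`, because by König's lemma a word outside the centre has no extension in `L`
beyond some length. Hence `α(w[0,ℓ]) - α(w[0,ℓ-1]) = ∑_{a < w ℓ} r (w[0,ℓ-1] a)`, where only the
letters `a` with `w[0,ℓ-1] a ∈ centre L` contribute. Beyond `|y|` no such letter lies below
`m_y ℓ`, since it would lead to an adherent word below `m_y`; so `α` is constant along `m_y`.
Dually no letter above `M_y ℓ` extends `M_y[0,ℓ-1]` inside the centre, so additivity makes
`α + r` constant along `M_y`, and (H3) sends `r` to `0` in the limit.
-/

section Words

variable {Γ : Type*}

theorem length_prefixOf (w : ℕ → Γ) (ℓ : ℕ) : (prefixOf w ℓ).length = ℓ :=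
  List.length_ofFn

theorem prefixOf_succ (w : ℕ → Γ) (ℓ : ℕ) : prefixOf w (ℓ + 1) = prefixOf w ℓ ++ [w ℓ] := by
  rw [prefixOf, List.ofFn_succ', List.concat_eq_append]; rfl

theorem prefixOf_eq_prefixOf_iff {w z : ℕ → Γ} {ℓ : ℕ} :
    prefixOf w ℓ = prefixOf z ℓ ↔ ∀ i < ℓ, w i = z i := by
  simp [prefixOf, List.ofFn_inj, funext_iff, Fin.forall_iff]

theorem prefixOf_eq_take (w : ℕ → Γ) {k ℓ : ℕ} (h : k ≤ ℓ) :
    prefixOf w k = (prefixOf w ℓ).take k := by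
  apply List.ext_getElem <;> simp [prefixOf, h]

theorem prefixOf_isPrefix (w : ℕ → Γ) {k ℓ : ℕ} (h : k ≤ ℓ) : prefixOf w k <+: prefixOf w ℓ :=
  prefixOf_eq_take w h ▸ List.take_prefix _ _

theorem prefixOf_getD (l : List Γ) (d : Γ) : prefixOf (fun i => l.getD i d) l.length = l := by
  apply List.ext_getElem <;> simp [prefixOf]

theorem deltaStar_append {Q : Type*} (δ : Q → Γ → Q) (q : Q) (u v : List Γ) :
    deltaStar δ q (u ++ v) = deltaStar δ (deltaStar δ q u) v :=
  List.foldl_append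

theorem append_singleton_lt_append_singleton_iff [LinearOrder Γ] {s t : List Γ}
    (h : s.length = t.length) {a b : Γ} : s ++ [a] < t ++ [b] ↔ s < t ∨ s = t ∧ a < b := by
  induction s generalizing t with
  | nil => cases t <;> simp_all [List.cons_lt_cons_iff]
  | cons x s ih =>
    cases t with
    | nil => simp at h
    | cons y t =>
      simp only [List.cons_append, List.cons_lt_cons_iff, ih (Nat.succ_injective h),
        List.cons.injEq]
      tauto

end Words

section Centre

variable {Γ : Type*} {L : Set (List Γ)}

theorem isClosed_setOf_prefixOf_mem [TopologicalSpace Γ] [DiscreteTopology Γ] (ℓ : ℕ)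
    (S : Set (List Γ)) : IsClosed {w : ℕ → Γ | prefixOf w ℓ ∈ S} :=
  (isClosed_discrete {g : Fin ℓ → Γ | List.ofFn g ∈ S}).preimage
    (continuous_pi fun i : Fin ℓ => continuous_apply (i : ℕ) :
      Continuous fun (w : ℕ → Γ) (i : Fin ℓ) => w i)

theorem mem_pref_of_isPrefix {u v : List Γ} (huv : u <+: v) (hv : v ∈ pref L) : u ∈ pref L :=
  let ⟨x, hx, hvx⟩ := hv
  ⟨x, hx, huv.trans hvx⟩

/-- König's lemma, through compactness of `ℕ → Γ`. -/
theorem mem_centre_of_forall_exists_append_mem [Finite Γ] {u : List Γ}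
    (h : ∀ m, ∃ z : List Γ, z.length = m ∧ u ++ z ∈ pref L) : u ∈ centre L := by
  obtain ⟨z₁, hz₁, -⟩ := h 1
  obtain ⟨d, -, -⟩ := List.exists_cons_of_length_eq_add_one hz₁
  let _ : TopologicalSpace Γ := ⊥
  have _ : DiscreteTopology Γ := ⟨rfl⟩
  let C : ℕ → Set (ℕ → Γ) := fun n =>
    {w | prefixOf w u.length ∈ ({u} : Set (List Γ))} ∩ {w | prefixOf w (u.length + n) ∈ pref L}
  have hC_closed : ∀ n, IsClosed (C n) := fun n =>
    (isClosed_setOf_prefixOf_mem _ _).inter (isClosed_setOf_prefixOf_mem _ _)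
  have hC_anti : ∀ n, C (n + 1) ⊆ C n := fun n w ⟨hu, hw⟩ =>
    ⟨hu, mem_pref_of_isPrefix (prefixOf_isPrefix w (by omega)) hw⟩
  have hC_nonempty : ∀ n, (C n).Nonempty := by
    intro n
    obtain ⟨z, hz, huz⟩ := h n
    have hlen : (u ++ z).length = u.length + n := by simp [hz]
    refine ⟨fun i => (u ++ z).getD i d, ?_, ?_⟩
    · simp only [Set.mem_ofPred_eq, Set.mem_singleton_iff]
      rw [prefixOf_eq_take _ (show u.length ≤ (u ++ z).length by simp), prefixOf_getD,
        List.take_left]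
    · rwa [Set.mem_ofPred_eq, ← hlen, prefixOf_getD]
  obtain ⟨w, hw⟩ := IsCompact.nonempty_iInter_of_sequence_nonempty_isCompact_isClosed C hC_anti
    hC_nonempty (hC_closed 0).isCompact hC_closed
  simp only [Set.mem_iInter] at hw
  refine ⟨w, fun ℓ => mem_pref_of_isPrefix (prefixOf_isPrefix w (by omega)) (hw ℓ).2, ?_⟩
  exact ((hw 0).1 : prefixOf w u.length = u).symm

theorem exists_mem_adh_of_prefixOf_append_mem_centre {w : ℕ → Γ} {ℓ : ℕ} {a : Γ}
    (h : prefixOf w ℓ ++ [a] ∈ centre L) :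
    ∃ w' ∈ adh L, prefixOf w' ℓ = prefixOf w ℓ ∧ w' ℓ = a := by
  obtain ⟨w', hw', hpre⟩ := h
  rw [List.length_append, length_prefixOf, List.length_singleton, prefixOf_succ] at hpre
  obtain ⟨hℓ, ha⟩ := List.append_inj' hpre rfl
  exact ⟨w', hw', hℓ.symm, (List.singleton_inj.mp ha).symm⟩

end Centre

section Counting

variable {Γ Q : Type*} (δ : Q → Γ → Q) (F : Set Q)

def consLengthEquiv (P : List Γ → Prop) (m : ℕ) :
    {z : List Γ // z.length = m + 1 ∧ P z} ≃
      Σ a : Γ, {z : List Γ // z.length = m ∧ P (a :: z)} where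
  toFun
    | ⟨a :: z, hl, hP⟩ => ⟨a, z, Nat.succ_injective hl, hP⟩
  invFun p := ⟨p.1 :: p.2.1, congrArg (· + 1) p.2.2.1, p.2.2.2⟩
  left_inv := by rintro ⟨_ | ⟨a, z⟩, hl, hP⟩ <;> simp at hl ⊢
  right_inv _ := rfl

theorem ucomp_succ [Fintype Γ] (q : Q) (m : ℕ) :
    ucomp δ F q (m + 1) = ∑ a, ucomp δ F (δ q a) m := by
  have hfin : ∀ (a : Γ), Finite {z : List Γ // z.length = m ∧ deltaStar δ q (a :: z) ∈ F} :=
    fun _ => ((List.finite_length_eq Γ m).subset fun _ hz => hz.1).to_subtype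
  rw [ucomp, ← Nat.card_coe_set_eq, Set.coe_ofPred, Nat.card_congr (consLengthEquiv _ m),
    Nat.card_sigma]
  simp only [ucomp, ← Nat.card_coe_set_eq, Set.coe_ofPred]
  rfl

theorem ucomp_deltaStar_eq_zero {L : Set (List Γ)} {q0 : Q} (hpc : pref L = L)
    (hL : L = {x | deltaStar δ q0 x ∈ F}) {u : List Γ} {m : ℕ}
    (hm : ∀ z : List Γ, z.length = m → u ++ z ∉ L) {n : ℕ} (hn : m ≤ n) :
    ucomp δ F (deltaStar δ q0 u) n = 0 := by
  suffices {z | z.length = n ∧ deltaStar δ (deltaStar δ q0 u) z ∈ F} = ∅ by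
    rw [ucomp, this, Set.ncard_empty]
  refine Set.eq_empty_of_forall_notMem fun z ⟨hz, hF⟩ => hm (z.take m) (by simp [hz, hn]) ?_
  rw [← hpc]
  refine ⟨u ++ z, ?_, (List.prefix_append_right_inj u).mpr (List.take_prefix m z)⟩
  rwa [hL, Set.mem_ofPred_eq, deltaStar_append]

end Counting

section Frequencies

variable {Γ Q : Type*} [Fintype Γ] {q0 : Q} {δ : Q → Γ → Q} {F : Set Q} {r : List Γ → ℝ}

theorem sum_append_singleton_eq_of_tendsto
    (hH2 : ∀ x : List Γ,
      Tendsto (fun n : ℕ =>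
          (ucomp δ F (deltaStar δ q0 x) (n - x.length) : ℝ) / (vcomp δ F q0 n : ℝ))
        atTop (𝓝 (r x)))
    (x : List Γ) : ∑ a, r (x ++ [a]) = r x := by
  refine tendsto_nhds_unique (tendsto_finsetSum _ fun a _ => hH2 (x ++ [a])) ((hH2 x).congr' ?_)
  filter_upwards [eventually_ge_atTop (x.length + 1)] with n hn
  have hcount : ucomp δ F (deltaStar δ q0 x) (n - x.length)
      = ∑ a, ucomp δ F (deltaStar δ q0 (x ++ [a])) (n - (x ++ [a]).length) := by
    rw [show n - x.length = n - (x.length + 1) + 1 by omega, ucomp_succ]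
    simp [deltaStar]
  rw [hcount, Nat.cast_sum, Finset.sum_div]

theorem eq_zero_of_notMem_centre_of_tendsto {L : Set (List Γ)} (hpc : pref L = L)
    (hL : L = {x | deltaStar δ q0 x ∈ F})
    (hH2 : ∀ x : List Γ,
      Tendsto (fun n : ℕ =>
          (ucomp δ F (deltaStar δ q0 x) (n - x.length) : ℝ) / (vcomp δ F q0 n : ℝ))
        atTop (𝓝 (r x)))
    {u : List Γ} (hu : u ∉ centre L) : r u = 0 := by
  obtain ⟨m, hm⟩ : ∃ m, ∀ z : List Γ, z.length = m → u ++ z ∉ L := by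
    by_contra! h
    exact hu (mem_centre_of_forall_exists_append_mem (hpc.symm ▸ h))
  refine tendsto_nhds_unique (hH2 u) (tendsto_const_nhds.congr' ?_)
  filter_upwards [eventually_ge_atTop (u.length + m)] with n hn
  rw [ucomp_deltaStar_eq_zero δ F hpc hL hm (by omega)]
  simp

end Frequencies

section Alpha

variable {Γ : Type*} [Fintype Γ] [LinearOrder Γ] {L : Set (List Γ)} {r : List Γ → ℝ}

open scoped Classical in
theorem alphaFin_eq_of_length_eq (hr0 : ∀ u ∉ centre L, r u = 0) {y : List Γ} {n : ℕ}
    (hy : y.length = n) :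
    alphaFin L r y
      = 1 - r [] + ∑ f : Fin n → Γ, if List.ofFn f < y then r (List.ofFn f) else 0 := by
  subst hy
  refine congrArg _ (Finset.sum_congr rfl fun f _ => ?_)
  by_cases hf : List.ofFn f ∈ centre L <;> simp [hf, hr0]

open scoped Classical in
theorem sum_lt_ofFn_append_singleton (hadd : ∀ u, ∑ a, r (u ++ [a]) = r u) {n : ℕ}
    (v : Fin n → Γ) (b : Γ) :
    ∑ f : Fin (n + 1) → Γ, (if List.ofFn f < List.ofFn v ++ [b] then r (List.ofFn f) else 0)
      = ∑ g : Fin n → Γ, (if List.ofFn g < List.ofFn v then r (List.ofFn g) else 0)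
        + ∑ a with a < b, r (List.ofFn v ++ [a]) := by
  have hsplit : ∀ g : Fin n → Γ,
      ∑ a, (if List.ofFn g ++ [a] < List.ofFn v ++ [b] then r (List.ofFn g ++ [a]) else 0)
        = (if List.ofFn g < List.ofFn v then r (List.ofFn g) else 0)
          + if g = v then ∑ a with a < b, r (List.ofFn v ++ [a]) else 0 := by
    intro g
    by_cases hgv : g = v
    · subst hgv
      simp [append_singleton_lt_append_singleton_iff, Finset.sum_filter]
    · have hne : List.ofFn g ≠ List.ofFn v := by rwa [Ne, List.ofFn_inj]
      simp only [append_singleton_lt_append_singleton_iff (List.length_ofFn.trans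
        List.length_ofFn.symm), hne, false_and, or_false, hgv, if_false, add_zero]
      split_ifs <;> simp [hadd]
  rw [← (Fin.snocEquiv fun _ => Γ).sum_comp, Fintype.sum_prod_type_right]
  simp only [Fin.snocEquiv_apply, List.ofFn_succ', Fin.snoc_castSucc, Fin.snoc_last,
    List.concat_eq_append, hsplit, Finset.sum_add_distrib]
  simp

theorem alphaFin_prefixOf_succ (hr0 : ∀ u ∉ centre L, r u = 0)
    (hadd : ∀ u, ∑ a, r (u ++ [a]) = r u) (w : ℕ → Γ) (ℓ : ℕ) :
    alphaFin L r (prefixOf w (ℓ + 1))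
      = alphaFin L r (prefixOf w ℓ) + ∑ a with a < w ℓ, r (prefixOf w ℓ ++ [a]) := by
  rw [alphaFin_eq_of_length_eq hr0 (length_prefixOf w (ℓ + 1)),
    alphaFin_eq_of_length_eq hr0 (length_prefixOf w ℓ), prefixOf_succ, add_assoc]
  exact congrArg _ (sum_lt_ofFn_append_singleton hadd _ _)

end Alpha

section Extremal

variable {Γ : Type*} [LinearOrder Γ] {L : Set (List Γ)}

theorem not_infLexLe_of_eqOn_of_lt {w z : ℕ → Γ} {ℓ : ℕ} (hagree : ∀ i < ℓ, w i = z i)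
    (hlt : z ℓ < w ℓ) : ¬ infLexLe w z := by
  rintro (rfl | ⟨k, hk, hwz⟩)
  · exact lt_irrefl _ hlt
  · rcases lt_trichotomy k ℓ with hkℓ | rfl | hℓk
    · exact (hagree k hkℓ ▸ hwz).false
    · exact lt_asymm hlt hwz
    · exact (hk ℓ hℓk ▸ hlt).false

variable {w : ℕ → Γ} {k ℓ : ℕ} {a : Γ}

theorem prefixOf_append_notMem_centre_of_lt
    (hmin : ∀ w' ∈ adh L, prefixOf w' k = prefixOf w k → infLexLe w w') (hkℓ : k ≤ ℓ)
    (ha : a < w ℓ) : prefixOf w ℓ ++ [a] ∉ centre L := by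
  intro h
  obtain ⟨w', hw', hpre, rfl⟩ := exists_mem_adh_of_prefixOf_append_mem_centre h
  refine not_infLexLe_of_eqOn_of_lt (prefixOf_eq_prefixOf_iff.mp hpre.symm) ha (hmin w' hw' ?_)
  rw [prefixOf_eq_take w' hkℓ, hpre, ← prefixOf_eq_take w hkℓ]

theorem prefixOf_append_notMem_centre_of_gt
    (hmax : ∀ w' ∈ adh L, prefixOf w' k = prefixOf w k → infLexLe w' w) (hkℓ : k ≤ ℓ)
    (ha : w ℓ < a) : prefixOf w ℓ ++ [a] ∉ centre L := by
  intro h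
  obtain ⟨w', hw', hpre, rfl⟩ := exists_mem_adh_of_prefixOf_append_mem_centre h
  refine not_infLexLe_of_eqOn_of_lt (prefixOf_eq_prefixOf_iff.mp hpre) ha (hmax w' hw' ?_)
  rw [prefixOf_eq_take w' hkℓ, hpre, ← prefixOf_eq_take w hkℓ]

variable [Fintype Γ] {r : List Γ → ℝ}

theorem alphaFin_prefixOf_eq_of_forall_infLexLe (hr0 : ∀ u ∉ centre L, r u = 0)
    (hadd : ∀ u, ∑ a, r (u ++ [a]) = r u)
    (hmin : ∀ w' ∈ adh L, prefixOf w' k = prefixOf w k → infLexLe w w') (hkℓ : k ≤ ℓ) :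
    alphaFin L r (prefixOf w ℓ) = alphaFin L r (prefixOf w k) := by
  induction ℓ, hkℓ using Nat.le_induction with
  | base => rfl
  | succ ℓ hkℓ ih =>
    rw [alphaFin_prefixOf_succ hr0 hadd, ih, add_eq_left]
    refine Finset.sum_eq_zero fun a ha => hr0 _ ?_
    exact prefixOf_append_notMem_centre_of_lt hmin hkℓ (Finset.mem_filter.mp ha).2

theorem alphaFin_add_prefixOf_eq_of_forall_infLexLe (hr0 : ∀ u ∉ centre L, r u = 0)
    (hadd : ∀ u, ∑ a, r (u ++ [a]) = r u)
    (hmax : ∀ w' ∈ adh L, prefixOf w' k = prefixOf w k → infLexLe w' w) (hkℓ : k ≤ ℓ) :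
    alphaFin L r (prefixOf w ℓ) + r (prefixOf w ℓ)
      = alphaFin L r (prefixOf w k) + r (prefixOf w k) := by
  induction ℓ, hkℓ using Nat.le_induction with
  | base => rfl
  | succ ℓ hkℓ ih =>
    have hsplit : r (prefixOf w ℓ)
        = ∑ a with a < w ℓ, r (prefixOf w ℓ ++ [a]) + r (prefixOf w (ℓ + 1)) := by
      rw [← hadd, ← Finset.sum_filter_add_sum_filter_not Finset.univ (· < w ℓ), prefixOf_succ]
      refine congrArg _ (Finset.sum_eq_single_of_mem _ (by simp) fun b hb hbw => hr0 _ ?_)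
      refine prefixOf_append_notMem_centre_of_gt hmax hkℓ (lt_of_le_of_ne ?_ (Ne.symm hbw))
      simpa using hb
    rw [alphaFin_prefixOf_succ hr0 hadd, ← ih, hsplit, add_assoc]

end Extremal

theorem stmt_15_general {Γ : Type*} [Fintype Γ] [LinearOrder Γ]
    (L : Set (List Γ)) (hpc : pref L = L)
    {Q : Type*} (q0 : Q) (δ : Q → Γ → Q) (F : Set Q)
    (hL : L = {x | deltaStar δ q0 x ∈ F})
    (r : List Γ → ℝ)
    (hH2 : ∀ x : List Γ,
      Tendsto (fun n : ℕ =>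
          (ucomp δ F (deltaStar δ q0 x) (n - x.length) : ℝ) / (vcomp δ F q0 n : ℝ))
        atTop (𝓝 (r x)))
    (hH3 : ∀ w ∈ adh L, Tendsto (fun ℓ : ℕ => r (prefixOf w ℓ)) atTop (𝓝 0))
    (y : List Γ)
    (my My : ℕ → Γ)
    -- `my` is a lexicographically least element of the set of words of `adh L`
    -- having `y` as a prefix
    (hmy : my ∈ adh L ∧ prefixOf my y.length = y ∧
      ∀ w ∈ adh L, prefixOf w y.length = y → infLexLe my w)
    -- `My` is a lexicographically greatest element of that set
    (hMy : My ∈ adh L ∧ prefixOf My y.length = y ∧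
      ∀ w ∈ adh L, prefixOf w y.length = y → infLexLe w My)
    (am aM : ℝ)
    (ham : Tendsto (fun ℓ : ℕ => alphaFin L r (prefixOf my ℓ)) atTop (𝓝 am))
    (haM : Tendsto (fun ℓ : ℕ => alphaFin L r (prefixOf My ℓ)) atTop (𝓝 aM)) :
    am = alphaFin L r y ∧ aM = alphaFin L r y + r y := by
  obtain ⟨-, hmy_pre, hmy_min⟩ := hmy
  obtain ⟨hMy_adh, hMy_pre, hMy_max⟩ := hMy
  have hr0 : ∀ u ∉ centre L, r u = 0 := fun u hu =>
    eq_zero_of_notMem_centre_of_tendsto hpc hL hH2 hu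
  have hadd : ∀ u, ∑ a, r (u ++ [a]) = r u := sum_append_singleton_eq_of_tendsto hH2
  constructor
  · refine tendsto_nhds_unique ham (tendsto_const_nhds.congr' ?_)
    filter_upwards [eventually_ge_atTop y.length] with ℓ hℓ
    rw [alphaFin_prefixOf_eq_of_forall_infLexLe hr0 hadd
      (fun w hw h => hmy_min w hw (h.trans hmy_pre)) hℓ, hmy_pre]
  · have hlim : Tendsto (fun ℓ => alphaFin L r (prefixOf My ℓ) + r (prefixOf My ℓ)) atTop
        (𝓝 (alphaFin L r y + r y)) := by
      refine tendsto_const_nhds.congr' ?_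
      filter_upwards [eventually_ge_atTop y.length] with ℓ hℓ
      rw [alphaFin_add_prefixOf_eq_of_forall_infLexLe hr0 hadd
        (fun w hw h => hMy_max w hw (h.trans hMy_pre)) hℓ, hMy_pre]
    simpa using tendsto_nhds_unique (haM.add (hH3 My hMy_adh)) hlim

theorem stmt_15 {Γ : Type*} [Fintype Γ] [LinearOrder Γ]
    (L : Set (List Γ)) (hLinf : L.Infinite) (hpc : pref L = L)
    {Q : Type*} (q0 : Q) (δ : Q → Γ → Q) (F : Set Q)
    (hacc : ∀ q : Q, ∃ x : List Γ, deltaStar δ q0 x = q)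
    (hL : L = {x | deltaStar δ q0 x ∈ F})
    (r : List Γ → ℝ)
    (hH2 : ∀ x : List Γ,
      Tendsto (fun n : ℕ =>
          (ucomp δ F (deltaStar δ q0 x) (n - x.length) : ℝ) / (vcomp δ F q0 n : ℝ))
        atTop (𝓝 (r x)))
    (hH3 : ∀ w ∈ adh L, Tendsto (fun ℓ : ℕ => r (prefixOf w ℓ)) atTop (𝓝 0))
    (y : List Γ) (hy : y ∈ centre L)
    (my My : ℕ → Γ)
    -- `my` is a lexicographically least element of the set of words of `adh L`
    -- having `y` as a prefix
    (hmy : my ∈ adh L ∧ prefixOf my y.length = y ∧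
      ∀ w ∈ adh L, prefixOf w y.length = y → infLexLe my w)
    -- `My` is a lexicographically greatest element of that set
    (hMy : My ∈ adh L ∧ prefixOf My y.length = y ∧
      ∀ w ∈ adh L, prefixOf w y.length = y → infLexLe w My)
    (am aM : ℝ)
    (ham : Tendsto (fun ℓ : ℕ => alphaFin L r (prefixOf my ℓ)) atTop (𝓝 am))
    (haM : Tendsto (fun ℓ : ℕ => alphaFin L r (prefixOf My ℓ)) atTop (𝓝 aM)) :
    am = alphaFin L r y ∧ aM = alphaFin L r y + r y :=
  stmt_15_general L hpc q0 δ F hL r hH2 hH3 y my My hmy hMy am aM ham haM
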